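/- arXiv:1507.07850 — 9 statements merged into one kernel-verified Lean document; each statement's English description precedes it below -/
import Mathlib

section
/- If y is obtained from x by a balancing step, then min_{i=1,…,n} f_i'(y_i) ≥ min_{i=1,…,n} f_i'(x_i). -/
/-- A balancing step from state `x` to state `y`, specified by a finite set `E` of
unordered pairs of distinct nodes such that: (i) the derivatives of the two endpoints
of each pair differ; (ii) every node belongs to at most one pair in which its
derivative is the strictly larger of the two, and at most one pair in which its
derivative is the strictly smaller of the two; and
`y i = x i − Σ_{j : {i,j} ∈ E} (f_i'(x_i) − f_j'(x_j)) / (2(L_i + L_j))`. -/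
def IsBalancingStep (n : ℕ) (f' : Fin n → ℝ → ℝ) (L : Fin n → ℝ)
    (x y : Fin n → ℝ) (E : Finset (Sym2 (Fin n))) : Prop :=
  (∀ i j : Fin n, s(i, j) ∈ E → f' i (x i) ≠ f' j (x j)) ∧
  (∀ i : Fin n,
    (Finset.univ.filter fun j => s(i, j) ∈ E ∧ f' j (x j) < f' i (x i)).card ≤ 1) ∧
  (∀ i : Fin n,
    (Finset.univ.filter fun j => s(i, j) ∈ E ∧ f' i (x i) < f' j (x j)).card ≤ 1) ∧
  (∀ i : Fin n, y i = x i - ∑ j ∈ Finset.univ.filter (fun j => s(i, j) ∈ E),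
      (f' i (x i) - f' j (x j)) / (2 * (L i + L j)))

/-- If y is obtained from x by a balancing step, then
min_i f_i'(y_i) ≥ min_i f_i'(x_i). -/
theorem stmt_2 (n : ℕ) (hn : 0 < n) (f f' : Fin n → ℝ → ℝ) (L : Fin n → ℝ)
    (hL : ∀ i, 0 < L i)
    (hconv : ∀ i, ConvexOn ℝ Set.univ (f i))
    (hderiv : ∀ i t, HasDerivAt (f i) (f' i t) t)
    (hlip : ∀ i, ∀ a b : ℝ, |f' i a - f' i b| ≤ L i * |a - b|)
    (x y : Fin n → ℝ) (E : Finset (Sym2 (Fin n)))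
    (hstep : IsBalancingStep n f' L x y E) :
    Finset.univ.inf' ⟨⟨0, hn⟩, Finset.mem_univ _⟩ (fun i => f' i (x i)) ≤
      Finset.univ.inf' ⟨⟨0, hn⟩, Finset.mem_univ _⟩ (fun i => f' i (y i)) := by
  obtain ⟨hne, hlow, hhigh, hy⟩ := hstep
  haveI : Nonempty (Fin n) := ⟨⟨0, hn⟩⟩
  set m : ℝ := Finset.univ.inf' ⟨⟨0, hn⟩, Finset.mem_univ _⟩ (fun i => f' i (x i)) with hm
  have hmx : ∀ j, m ≤ f' j (x j) := fun j => Finset.inf'_le _ (Finset.mem_univ j)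
  apply Finset.le_inf'
  intro i _
  -- monotonicity of derivative
  have hmono : Monotone (fun t => f' i t) := by
    have := (hconv i).monotoneOn_deriv (fun t _ => (hderiv i t).differentiableAt)
    intro a b hab
    have h1 := this (Set.mem_univ a) (Set.mem_univ b) hab
    rwa [(hderiv i a).deriv, (hderiv i b).deriv] at h1
  set S : ℝ := ∑ j ∈ Finset.univ.filter (fun j => s(i, j) ∈ E),
      (f' i (x i) - f' j (x j)) / (2 * (L i + L j)) with hS
  have hyi : y i = x i - S := hy i
  by_cases hSpos : 0 ≤ S
  · -- Lipschitz case
    -- split the sum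
    have hsplit := Finset.sum_filter_add_sum_filter_not
      (Finset.univ.filter (fun j => s(i, j) ∈ E)) (fun j => f' j (x j) < f' i (x i))
      (fun j => (f' i (x i) - f' j (x j)) / (2 * (L i + L j)))
    rw [Finset.filter_filter, Finset.filter_filter] at hsplit
    have hBle : ∑ j ∈ Finset.univ.filter (fun j => s(i, j) ∈ E ∧ ¬ f' j (x j) < f' i (x i)),
        (f' i (x i) - f' j (x j)) / (2 * (L i + L j)) ≤ 0 := by
      apply Finset.sum_nonpos
      intro j hj
      rw [Finset.mem_filter] at hj
      have : f' i (x i) - f' j (x j) ≤ 0 := by linarith [not_lt.mp hj.2.2]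
      apply div_nonpos_of_nonpos_of_nonneg this
      nlinarith [hL i, hL j]
    have hAle : ∑ j ∈ Finset.univ.filter (fun j => s(i, j) ∈ E ∧ f' j (x j) < f' i (x i)),
        (f' i (x i) - f' j (x j)) / (2 * (L i + L j)) ≤ (f' i (x i) - m) / (2 * L i) := by
      rcases Finset.card_le_one_iff_subset_singleton.mp (hlow i) with ⟨a, ha⟩
      rcases Finset.subset_singleton_iff.mp ha with h0 | h1
      · rw [h0, Finset.sum_empty]
        apply div_nonneg (by linarith [hmx i]) (by nlinarith [hL i])
      · rw [h1, Finset.sum_singleton]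
        apply div_le_div₀ (by linarith [hmx i])
        · have : a ∈ Finset.univ.filter (fun j => s(i, j) ∈ E ∧ f' j (x j) < f' i (x i)) := by
            rw [h1]; exact Finset.mem_singleton_self a
          rw [Finset.mem_filter] at this
          linarith [hmx a]
        · nlinarith [hL i]
        · nlinarith [hL i, hL a]
    have hSA : S ≤ (f' i (x i) - m) / (2 * L i) := by
      rw [hS, ← hsplit]; linarith
    have hlipi := hlip i (y i) (x i)
    rw [hyi] at hlipi ⊢
    have habs : |x i - S - x i| = S := by
      rw [show x i - S - x i = -S by ring, abs_neg, abs_of_nonneg hSpos]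
    rw [habs] at hlipi
    have h2 := abs_le.mp hlipi
    have hLi := hL i
    have : L i * S ≤ (f' i (x i) - m) / 2 := by
      rw [le_div_iff₀ (by positivity : (0:ℝ) < 2 * L i)] at hSA
      nlinarith
    linarith [h2.1, hmx i]
  · -- monotone case: y i ≥ x i
    have : x i ≤ y i := by rw [hyi]; linarith [not_le.mp hSpos]
    calc m ≤ f' i (x i) := hmx i
    _ ≤ f' i (y i) := hmono this
end

section
/- If y is obtained from x by a balancing step, then max_{i=1,…,n} f_i'(y_i) ≤ max_{i=1,…,n} f_i'(x_i). -/
/-!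
The derivative of each cost is nondecreasing (convexity), so a node whose state moves down
cannot exceed its old derivative. A node moving up is pushed only by pairs in which its
derivative is the smaller one, and there is at most one such pair; the move is then at most
`(M - f_i'(x_i)) / (2 L_i)`, where `M` is the old maximum, and by the Lipschitz bound the
derivative rises by at most half of the gap `M - f_i'(x_i)`.
-/

open Finset

theorem monotone_of_convexOn_univ_of_hasDerivAt {f f' : ℝ → ℝ} (hf : ConvexOn ℝ Set.univ f)
    (hderiv : ∀ t, HasDerivAt f (f' t) t) : Monotone f' := by
  intro a b hab
  have h := hf.monotoneOn_deriv (fun t _ => (hderiv t).differentiableAt)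
    (Set.mem_univ a) (Set.mem_univ b) hab
  rwa [(hderiv a).deriv, (hderiv b).deriv] at h

theorem le_add_mul_sub_of_abs_sub_le {g : ℝ → ℝ} {K a b : ℝ} (hab : a ≤ b)
    (h : |g b - g a| ≤ K * |b - a|) : g b ≤ g a + K * (b - a) := by
  rw [abs_of_nonneg (sub_nonneg.mpr hab)] at h
  linarith [le_abs_self (g b - g a)]

theorem Finset.sum_le_of_card_le_one {ι M : Type*} [AddCommMonoid M] [PartialOrder M]
    [IsOrderedAddMonoid M] {s : Finset ι} {g : ι → M} {c : M} (hs : #s ≤ 1) (hc : 0 ≤ c)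
    (hg : ∀ j ∈ s, g j ≤ c) : ∑ j ∈ s, g j ≤ c :=
  calc ∑ j ∈ s, g j ≤ #s • c := sum_le_card_nsmul s g c hg
    _ ≤ 1 • c := nsmul_le_nsmul_left hc hs
    _ = c := one_nsmul c

namespace IsBalancingStep

variable {n : ℕ} {f' : Fin n → ℝ → ℝ} {L : Fin n → ℝ} {x y : Fin n → ℝ}
  {E : Finset (Sym2 (Fin n))}

theorem sub_le_sum_uphill (hL : ∀ i, 0 < L i) (hstep : IsBalancingStep n f' L x y E)
    (i : Fin n) :
    y i - x i ≤ ∑ j ∈ univ.filter (fun j => s(i, j) ∈ E ∧ f' i (x i) < f' j (x j)),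
      (f' j (x j) - f' i (x i)) / (2 * (L i + L j)) := by
  set g : Fin n → ℝ := fun j => (f' j (x j) - f' i (x i)) / (2 * (L i + L j))
  have hdown : ∑ j ∈ (univ.filter fun j => s(i, j) ∈ E).filter
      (fun j => ¬ f' i (x i) < f' j (x j)), g j ≤ 0 := by
    refine sum_nonpos fun j hj => div_nonpos_of_nonpos_of_nonneg ?_ (by linarith [hL i, hL j])
    linarith [not_lt.mp (mem_filter.mp hj).2]
  have hy : y i - x i = ∑ j ∈ univ.filter (fun j => s(i, j) ∈ E), g j := by
    rw [hstep.2.2.2 i, sub_sub_cancel_left, ← sum_neg_distrib]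
    exact sum_congr rfl fun j _ => by simp only [g, ← neg_div, neg_sub]
  rw [hy, ← sum_filter_add_sum_filter_not _ (fun j => f' i (x i) < f' j (x j)), filter_filter]
  linarith

theorem sub_le_div (hL : ∀ i, 0 < L i) (hstep : IsBalancingStep n f' L x y E) {M : ℝ}
    (hM : ∀ j, f' j (x j) ≤ M) (i : Fin n) :
    y i - x i ≤ (M - f' i (x i)) / (2 * L i) := by
  have hgap : 0 ≤ M - f' i (x i) := sub_nonneg.mpr (hM i)
  refine (hstep.sub_le_sum_uphill hL i).trans
    (sum_le_of_card_le_one (hstep.2.2.1 i) (by have := hL i; positivity) fun j _ => ?_)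
  calc (f' j (x j) - f' i (x i)) / (2 * (L i + L j))
      ≤ (M - f' i (x i)) / (2 * (L i + L j)) := by
        gcongr
        · linarith [hL i, hL j]
        · exact hM j
    _ ≤ (M - f' i (x i)) / (2 * L i) := by
        gcongr
        · linarith [hL i]
        · linarith [hL j]

end IsBalancingStep

/-- If y is obtained from x by a balancing step, then
max_i f_i'(y_i) ≤ max_i f_i'(x_i). -/
theorem stmt_3 (n : ℕ) (hn : 0 < n) (f f' : Fin n → ℝ → ℝ) (L : Fin n → ℝ)
    (hL : ∀ i, 0 < L i)
    (hconv : ∀ i, ConvexOn ℝ Set.univ (f i))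
    (hderiv : ∀ i t, HasDerivAt (f i) (f' i t) t)
    (hlip : ∀ i, ∀ a b : ℝ, |f' i a - f' i b| ≤ L i * |a - b|)
    (x y : Fin n → ℝ) (E : Finset (Sym2 (Fin n)))
    (hstep : IsBalancingStep n f' L x y E) :
    Finset.univ.sup' ⟨⟨0, hn⟩, Finset.mem_univ _⟩ (fun i => f' i (y i)) ≤
      Finset.univ.sup' ⟨⟨0, hn⟩, Finset.mem_univ _⟩ (fun i => f' i (x i)) := by
  set M := Finset.univ.sup' ⟨⟨0, hn⟩, Finset.mem_univ _⟩ (fun i => f' i (x i))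
  have hM : ∀ j, f' j (x j) ≤ M := fun j => le_sup' (fun k => f' k (x k)) (mem_univ j)
  refine sup'_le _ _ fun i _ => ?_
  rcases le_or_gt (y i) (x i) with hdown | hup
  · exact (monotone_of_convexOn_univ_of_hasDerivAt (hconv i) (hderiv i) hdown).trans (hM i)
  have hLi := hL i
  calc f' i (y i) ≤ f' i (x i) + L i * (y i - x i) :=
        le_add_mul_sub_of_abs_sub_le hup.le (hlip i _ _)
    _ ≤ f' i (x i) + L i * ((M - f' i (x i)) / (2 * L i)) := by
        gcongr; exact hstep.sub_le_div hL hM i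
    _ = (f' i (x i) + M) / 2 := by field_simp; ring
    _ ≤ M := by linarith [hM i]
end

section
/- Let x(k), x(k+1), …, x(k+T+1) be states such that each x(t+1) is obtained from x(t) by a balancing step with pair set Ē(t), and suppose the nodes are labeled so that f_1'(x_1(k)) ≥ f_2'(x_2(k)) ≥ … ≥ f_n'(x_n(k)). Fix d ∈ {1,…,n−1} and suppose that for every t ∈ {k,…,k+T} no pair of Ē(t) has one endpoint in {1,…,d} and the other in {d+1,…,n}. Then f_i'(x_i(k+T+1)) ≥ f_d'(x_d(k)) for every i ∈ {1,…,d}, and f_i'(x_i(k+T+1)) ≤ f_{d+1}'(x_{d+1}(k)) for every i ∈ {d+1,…,n}. -/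
lemma step_lb (n : ℕ) (f' : Fin n → ℝ → ℝ) (L : Fin n → ℝ) (x y : Fin n → ℝ)
    (E : Finset (Sym2 (Fin n))) (hL : ∀ i, 0 < L i)
    (hmono : ∀ i, Monotone (f' i))
    (hlip : ∀ i, ∀ a b : ℝ, |f' i a - f' i b| ≤ L i * |a - b|)
    (h : IsBalancingStep n f' L x y E)
    (S : Set (Fin n)) (hS : ∀ i j : Fin n, s(i, j) ∈ E → (i ∈ S ↔ j ∈ S))
    (m : ℝ) (hm : ∀ i ∈ S, m ≤ f' i (x i)) :
    ∀ i ∈ S, m ≤ f' i (y i) := by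
  obtain ⟨hne, hdown, _hup, hy⟩ := h
  intro i hi
  classical
  set F : Finset (Fin n) := Finset.univ.filter (fun j => s(i, j) ∈ E) with hF
  set q : Fin n → Prop := fun j => f' j (x j) < f' i (x i) with hq
  have hsplit : F = F.filter q ∪ F.filter (fun j => ¬ q j) :=
    (Finset.filter_union_filter_not_eq q F).symm
  have hdisj : Disjoint (F.filter q) (F.filter (fun j => ¬ q j)) :=
    Finset.disjoint_filter_filter_not F F q
  have hsum : ∑ j ∈ F, (f' i (x i) - f' j (x j)) / (2 * (L i + L j))
      = (∑ j ∈ F.filter q, (f' i (x i) - f' j (x j)) / (2 * (L i + L j)))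
      + ∑ j ∈ F.filter (fun j => ¬ q j), (f' i (x i) - f' j (x j)) / (2 * (L i + L j)) := by
    conv_lhs => rw [hsplit]
    exact Finset.sum_union hdisj
  have hneg : ∑ j ∈ F.filter (fun j => ¬ q j),
      (f' i (x i) - f' j (x j)) / (2 * (L i + L j)) ≤ 0 := by
    apply Finset.sum_nonpos
    intro j hj
    simp only [Finset.mem_filter, hF, hq] at hj
    have h1 : f' i (x i) ≤ f' j (x j) := not_lt.mp hj.2
    have h2 : 0 < 2 * (L i + L j) := by have := hL i; have := hL j; linarith
    exact div_nonpos_iff.mpr (Or.inr ⟨by linarith, h2.le⟩)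
  set Sd := ∑ j ∈ F.filter q, (f' i (x i) - f' j (x j)) / (2 * (L i + L j)) with hSd
  have hyge : x i - Sd ≤ y i := by rw [hy i, ← hF, hsum]; linarith
  have key : m ≤ f' i (x i - Sd) := by
    rcases Finset.eq_empty_or_nonempty (F.filter q) with he | hne'
    · rw [hSd, he]; simpa using hm i hi
    · have hcard : (F.filter q).card = 1 := by
        refine le_antisymm ?_ (Finset.card_pos.mpr hne')
        have : F.filter q = Finset.univ.filter
            (fun j => s(i, j) ∈ E ∧ f' j (x j) < f' i (x i)) := by
          rw [hF, Finset.filter_filter]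
        rw [this]; exact hdown i
      obtain ⟨j, hj⟩ := Finset.card_eq_one.mp hcard
      have hjmem : j ∈ F.filter q := by rw [hj]; exact Finset.mem_singleton_self j
      simp only [Finset.mem_filter, hF, hq, Finset.mem_univ, true_and] at hjmem
      obtain ⟨hjE, hjlt⟩ := hjmem
      have hjS : j ∈ S := (hS i j hjE).mp hi
      have hmj : m ≤ f' j (x j) := hm j hjS
      have hc : 0 < L i + L j := by have := hL i; have := hL j; linarith
      have hSeq : Sd = (f' i (x i) - f' j (x j)) / (2 * (L i + L j)) := by
        rw [hSd, hj, Finset.sum_singleton]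
      have hδpos : 0 ≤ Sd := by
        rw [hSeq]; exact div_nonneg (by linarith) (by positivity)
      have hlipbd : f' i (x i) - f' i (x i - Sd) ≤ L i * Sd := by
        have := hlip i (x i) (x i - Sd)
        have habs : |x i - (x i - Sd)| = Sd := by
          rw [show x i - (x i - Sd) = Sd by ring, abs_of_nonneg hδpos]
        rw [habs] at this
        exact le_trans (le_abs_self _) this
      have hhalf : L i * Sd ≤ (f' i (x i) - f' j (x j)) / 2 := by
        rw [hSeq, ← mul_div_assoc, div_le_div_iff₀ (by positivity) (by norm_num : (0:ℝ) < 2)]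
        have := hL j
        nlinarith [mul_pos (hL i) hc]
      linarith
  have := hmono i hyge
  linarith

lemma step_ub (n : ℕ) (f' : Fin n → ℝ → ℝ) (L : Fin n → ℝ) (x y : Fin n → ℝ)
    (E : Finset (Sym2 (Fin n))) (hL : ∀ i, 0 < L i)
    (hmono : ∀ i, Monotone (f' i))
    (hlip : ∀ i, ∀ a b : ℝ, |f' i a - f' i b| ≤ L i * |a - b|)
    (h : IsBalancingStep n f' L x y E)
    (S : Set (Fin n)) (hS : ∀ i j : Fin n, s(i, j) ∈ E → (i ∈ S ↔ j ∈ S))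
    (M : ℝ) (hm : ∀ i ∈ S, f' i (x i) ≤ M) :
    ∀ i ∈ S, f' i (y i) ≤ M := by
  obtain ⟨hne, _hdown, hup, hy⟩ := h
  intro i hi
  classical
  set F : Finset (Fin n) := Finset.univ.filter (fun j => s(i, j) ∈ E) with hF
  set q : Fin n → Prop := fun j => f' i (x i) < f' j (x j) with hq
  have hsplit : F = F.filter q ∪ F.filter (fun j => ¬ q j) :=
    (Finset.filter_union_filter_not_eq q F).symm
  have hdisj : Disjoint (F.filter q) (F.filter (fun j => ¬ q j)) :=
    Finset.disjoint_filter_filter_not F F q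
  have hsum : ∑ j ∈ F, (f' i (x i) - f' j (x j)) / (2 * (L i + L j))
      = (∑ j ∈ F.filter q, (f' i (x i) - f' j (x j)) / (2 * (L i + L j)))
      + ∑ j ∈ F.filter (fun j => ¬ q j), (f' i (x i) - f' j (x j)) / (2 * (L i + L j)) := by
    conv_lhs => rw [hsplit]
    exact Finset.sum_union hdisj
  have hpos : 0 ≤ ∑ j ∈ F.filter (fun j => ¬ q j),
      (f' i (x i) - f' j (x j)) / (2 * (L i + L j)) := by
    apply Finset.sum_nonneg
    intro j hj
    simp only [Finset.mem_filter, hF, hq] at hj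
    have h1 : f' j (x j) ≤ f' i (x i) := not_lt.mp hj.2
    have h2 : 0 < 2 * (L i + L j) := by have := hL i; have := hL j; linarith
    exact div_nonneg (by linarith) h2.le
  set Su := ∑ j ∈ F.filter q, (f' i (x i) - f' j (x j)) / (2 * (L i + L j)) with hSu
  have hyle : y i ≤ x i - Su := by rw [hy i, ← hF, hsum]; linarith
  have key : f' i (x i - Su) ≤ M := by
    rcases Finset.eq_empty_or_nonempty (F.filter q) with he | hne'
    · rw [hSu, he]; simpa using hm i hi
    · have hcard : (F.filter q).card = 1 := by
        refine le_antisymm ?_ (Finset.card_pos.mpr hne')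
        have : F.filter q = Finset.univ.filter
            (fun j => s(i, j) ∈ E ∧ f' i (x i) < f' j (x j)) := by
          rw [hF, Finset.filter_filter]
        rw [this]; exact hup i
      obtain ⟨j, hj⟩ := Finset.card_eq_one.mp hcard
      have hjmem : j ∈ F.filter q := by rw [hj]; exact Finset.mem_singleton_self j
      simp only [Finset.mem_filter, hF, hq, Finset.mem_univ, true_and] at hjmem
      obtain ⟨hjE, hjlt⟩ := hjmem
      have hjS : j ∈ S := (hS i j hjE).mp hi
      have hmj : f' j (x j) ≤ M := hm j hjS
      have hc : 0 < L i + L j := by have := hL i; have := hL j; linarith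
      have hSeq : Su = (f' i (x i) - f' j (x j)) / (2 * (L i + L j)) := by
        rw [hSu, hj, Finset.sum_singleton]
      have hδneg : Su ≤ 0 := by
        rw [hSeq]
        exact div_nonpos_iff.mpr (Or.inr ⟨by linarith, by positivity⟩)
      have hlipbd : f' i (x i - Su) - f' i (x i) ≤ L i * (-Su) := by
        have := hlip i (x i - Su) (x i)
        have habs : |x i - Su - x i| = -Su := by
          rw [show x i - Su - x i = -Su by ring, abs_of_nonneg (by linarith)]
        rw [habs] at this
        exact le_trans (le_abs_self _) this
      have hhalf : L i * (-Su) ≤ (f' j (x j) - f' i (x i)) / 2 := by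
        have hSeq' : -Su = (f' j (x j) - f' i (x i)) / (2 * (L i + L j)) := by
          rw [hSeq]; ring
        rw [hSeq', ← mul_div_assoc, div_le_div_iff₀ (by positivity) (by norm_num : (0:ℝ) < 2)]
        have := hL j
        nlinarith [mul_pos (hL i) hc]
      linarith
  have := hmono i hyle
  linarith

/-- Along a sequence of balancing steps from time k to k+T+1, if the nodes
are labeled so that the derivatives at time k are nonincreasing and no pair used during
times k,…,k+T crosses the cut d, then every node on the high side of the cut keeps a
derivative at least f_d'(x_d(k)) at time k+T+1, and every node on the low side keeps a
derivative at most f_{d+1}'(x_{d+1}(k)).  (Nodes are 0-indexed: the cut d separates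
{0,…,d} from {d+1,…,n−1}, corresponding to the 1-based cut d ∈ {1,…,n−1}.) -/
theorem stmt_4 (n : ℕ) (hn : 0 < n) (f f' : Fin n → ℝ → ℝ) (L : Fin n → ℝ)
    (hL : ∀ i, 0 < L i)
    (hconv : ∀ i, ConvexOn ℝ Set.univ (f i))
    (hderiv : ∀ i t, HasDerivAt (f i) (f' i t) t)
    (hlip : ∀ i, ∀ a b : ℝ, |f' i a - f' i b| ≤ L i * |a - b|)
    (x : ℕ → Fin n → ℝ) (E : ℕ → Finset (Sym2 (Fin n)))
    (k T : ℕ)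
    (hstep : ∀ t, k ≤ t → t ≤ k + T → IsBalancingStep n f' L (x t) (x (t + 1)) (E t))
    (hsort : ∀ i j : Fin n, i ≤ j → f' j (x k j) ≤ f' i (x k i))
    (d : Fin n) (hd : (d : ℕ) + 1 < n)
    (hcut : ∀ t, k ≤ t → t ≤ k + T →
      ∀ i j : Fin n, s(i, j) ∈ E t → (i ≤ d ↔ j ≤ d)) :
    (∀ i : Fin n, i ≤ d → f' d (x k d) ≤ f' i (x (k + T + 1) i)) ∧
    (∀ i : Fin n, d < i →
      f' i (x (k + T + 1) i) ≤ f' ⟨(d : ℕ) + 1, hd⟩ (x k ⟨(d : ℕ) + 1, hd⟩)) := by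
  have hmono : ∀ i, Monotone (f' i) := by
    intro i
    have hmon := (hconv i).monotoneOn_deriv
      (fun t _ => (hderiv i t).differentiableAt)
    intro a b hab
    have := hmon (Set.mem_univ a) (Set.mem_univ b) hab
    rwa [(hderiv i a).deriv, (hderiv i b).deriv] at this
  set dd : Fin n := ⟨(d : ℕ) + 1, hd⟩ with hdd
  have main : ∀ s : ℕ, s ≤ T + 1 →
      (∀ i : Fin n, i ≤ d → f' d (x k d) ≤ f' i (x (k + s) i)) ∧
      (∀ i : Fin n, d < i → f' i (x (k + s) i) ≤ f' dd (x k dd)) := by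
    intro s
    induction s with
    | zero =>
      intro _
      refine ⟨fun i hi => hsort i d hi, fun i hi => hsort dd i ?_⟩
      rw [Fin.le_def]
      exact Fin.lt_def.mp hi
    | succ s ih =>
      intro hs
      obtain ⟨ih1, ih2⟩ := ih (Nat.le_of_succ_le hs)
      have hk1 : k ≤ k + s := Nat.le_add_right k s
      have hk2 : k + s ≤ k + T := by omega
      have hstep' := hstep (k + s) hk1 hk2
      have hcut' := hcut (k + s) hk1 hk2
      constructor
      · exact fun i hi =>
          step_lb n f' L (x (k + s)) (x (k + s + 1)) (E (k + s)) hL hmono hlip hstep'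
            {i | i ≤ d} (fun i j hij => hcut' i j hij) (f' d (x k d)) ih1 i hi
      · refine fun i hi =>
          step_ub n f' L (x (k + s)) (x (k + s + 1)) (E (k + s)) hL hmono hlip hstep'
            {i | d < i} (fun i j hij => ?_) (f' dd (x k dd)) ih2 i hi
        simp only [Set.mem_setOf_eq, ← not_le]
        exact not_congr (hcut' i j hij)
  exact main (T + 1) le_rfl
end

section
/- If y is obtained from x by a balancing step with pair set Ē, then F(y) ≤ F(x) − Σ_{{i,j} ∈ Ē} (f_i'(x_i) − f_j'(x_j))² / (4(L_i + L_j)), where F(x) = Σ_{i=1}^n f_i(x_i). -/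
lemma descent (f f' : ℝ → ℝ) (L : ℝ)
    (hd : ∀ t, HasDerivAt f (f' t) t)
    (hlip : ∀ a b : ℝ, |f' a - f' b| ≤ L * |a - b|) (a b : ℝ) :
    f b ≤ f a + f' a * (b - a) + L / 2 * (b - a) ^ 2 := by
  set g : ℝ → ℝ := fun t => f a + f' a * (t - a) + L / 2 * (t - a) ^ 2 - f t with hgdef
  have hg' : ∀ t, HasDerivAt g (f' a + L * (t - a) - f' t) t := by
    intro t
    have h1 : HasDerivAt (fun t : ℝ => f a + f' a * (t - a) + L / 2 * (t - a) ^ 2)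
        (f' a + L * (t - a)) t := by
      have h2 := ((hasDerivAt_id t).sub_const a).const_mul (f' a)
      have h3 := (((hasDerivAt_id t).sub_const a).pow 2).const_mul (L / 2)
      have := (h2.const_add (f a)).add h3
      refine this.congr_deriv ?_
      simp only [id_eq]
      push_cast
      ring
    exact h1.sub (hd t)
  have hgc : Continuous g := by
    have : Differentiable ℝ g := fun t => (hg' t).differentiableAt
    exact this.continuous
  have hderivg : ∀ t, deriv g t = f' a + L * (t - a) - f' t := fun t => (hg' t).deriv
  have hga : g a = 0 := by simp [hgdef]
  have key : 0 ≤ g b := by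
    rcases le_total a b with hab | hab
    · have hmono : MonotoneOn g (Set.Icc a b) := by
        apply monotoneOn_of_deriv_nonneg (convex_Icc a b) hgc.continuousOn
        · exact fun t _ => (hg' t).differentiableAt.differentiableWithinAt
        · intro t ht
          rw [interior_Icc] at ht
          rw [hderivg]
          have h1 := hlip t a
          have h2 : |t - a| = t - a := abs_of_nonneg (by linarith [ht.1])
          have h3 : f' t - f' a ≤ |f' t - f' a| := le_abs_self _
          rw [h2] at h1
          linarith
      have := hmono (Set.left_mem_Icc.mpr hab) (Set.right_mem_Icc.mpr hab) hab
      linarith [hga ▸ this]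
    · have hanti : AntitoneOn g (Set.Icc b a) := by
        apply antitoneOn_of_deriv_nonpos (convex_Icc b a) hgc.continuousOn
        · exact fun t _ => (hg' t).differentiableAt.differentiableWithinAt
        · intro t ht
          rw [interior_Icc] at ht
          rw [hderivg]
          have h1 := hlip a t
          have h2 : |a - t| = a - t := abs_of_nonneg (by linarith [ht.2])
          have h3 : f' a - f' t ≤ |f' a - f' t| := le_abs_self _
          rw [h2] at h1
          linarith
      have := hanti (Set.left_mem_Icc.mpr hab) (Set.right_mem_Icc.mpr hab) hab
      linarith [hga ▸ this]
  simp only [hgdef] at key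
  linarith

lemma sq_sum_card_le_one {α : Type*} (s : Finset α) (hs : s.card ≤ 1) (c : α → ℝ) :
    (∑ j ∈ s, c j) ^ 2 = ∑ j ∈ s, (c j) ^ 2 := by
  rcases Nat.le_one_iff_eq_zero_or_eq_one.mp hs with h | h
  · rw [Finset.card_eq_zero.mp h]; simp
  · obtain ⟨a, rfl⟩ := Finset.card_eq_one.mp h; simp

lemma sum_pairs {n : ℕ} (E : Finset (Sym2 (Fin n))) (h : Fin n → Fin n → ℝ)
    (hE : ∀ i j, s(i, j) ∈ E → i ≠ j) :
    ∑ i, ∑ j ∈ Finset.univ.filter (fun j => s(i, j) ∈ E), h i j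
      = ∑ e ∈ E, Sym2.lift ⟨fun i j => h i j + h j i, by intro a b; ring⟩ e := by
  classical
  set T : Finset (Fin n × Fin n) :=
    (Finset.univ ×ˢ Finset.univ).filter (fun p : Fin n × Fin n => s(p.1, p.2) ∈ E) with hT
  have key : ∑ p ∈ T, h p.1 p.2
      = ∑ i, ∑ j ∈ Finset.univ.filter (fun j => s(i, j) ∈ E), h i j := by
    rw [hT, Finset.sum_filter, Finset.sum_product]
    simp [Finset.sum_filter]
  rw [← key]
  have maps : ∀ p ∈ T, s(p.1, p.2) ∈ E := fun p hp => (Finset.mem_filter.mp hp).2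
  rw [← Finset.sum_fiberwise_of_maps_to maps (fun p => h p.1 p.2)]
  refine Finset.sum_congr rfl ?_
  intro e he
  revert he
  induction e using Sym2.ind with
  | _ a b =>
    intro he
    have hab : a ≠ b := hE a b he
    have hfib : T.filter (fun p => s(p.1, p.2) = s(a, b)) = {(a, b), (b, a)} := by
      ext ⟨p1, p2⟩
      simp only [hT, Finset.mem_filter, Finset.mem_product, Finset.mem_univ, true_and,
        Finset.mem_insert, Finset.mem_singleton, Prod.mk.injEq, Sym2.eq_iff]
      constructor
      · rintro ⟨-, h⟩; tauto
      · rintro (⟨rfl, rfl⟩ | ⟨rfl, rfl⟩)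
        · exact ⟨he, Or.inl ⟨rfl, rfl⟩⟩
        · exact ⟨by rwa [Sym2.eq_swap], Or.inr ⟨rfl, rfl⟩⟩
    rw [hfib, Finset.sum_pair (by simp [Prod.ext_iff, hab, hab.symm]), Sym2.lift_mk]



/-- If y is obtained from x by a balancing step with pair set E, then
F(y) ≤ F(x) − Σ_{{i,j} ∈ E} (f_i'(x_i) − f_j'(x_j))² / (4(L_i + L_j)). -/
theorem stmt_6 (n : ℕ) (hn : 0 < n) (f f' : Fin n → ℝ → ℝ) (L : Fin n → ℝ)
    (hL : ∀ i, 0 < L i)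
    (hconv : ∀ i, ConvexOn ℝ Set.univ (f i))
    (hderiv : ∀ i t, HasDerivAt (f i) (f' i t) t)
    (hlip : ∀ i, ∀ a b : ℝ, |f' i a - f' i b| ≤ L i * |a - b|)
    (x y : Fin n → ℝ) (E : Finset (Sym2 (Fin n)))
    (hstep : IsBalancingStep n f' L x y E) :
    ∑ i, f i (y i) ≤ ∑ i, f i (x i) -
      ∑ e ∈ E, Sym2.lift
        ⟨fun i j => (f' i (x i) - f' j (x j)) ^ 2 / (4 * (L i + L j)),
          by intro a b; ring_nf⟩ e := by
  classical
  obtain ⟨hE1, hE2, hE3, hy⟩ := hstep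
  have hne : ∀ i j, s(i, j) ∈ E → i ≠ j := by
    intro i j h heq
    subst heq
    exact hE1 i i h rfl
  set c : Fin n → Fin n → ℝ :=
    fun i j => (f' i (x i) - f' j (x j)) / (2 * (L i + L j)) with hc
  set N : Fin n → Finset (Fin n) :=
    fun i => Finset.univ.filter (fun j => s(i, j) ∈ E) with hN
  -- per node bound
  have hnode : ∀ i, f i (y i) ≤ f i (x i) +
      ∑ j ∈ N i, (-(f' i (x i)) * c i j + L i * (c i j) ^ 2) := by
    intro i
    have hdes := descent (f i) (f' i) (L i) (hderiv i) (hlip i) (x i) (y i)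
    have hyi : y i - x i = -∑ j ∈ N i, c i j := by
      rw [hy i]
      simp only [hN, hc]
      ring
    set P : Fin n → Prop := fun j => f' j (x j) < f' i (x i) with hP
    have hsplit : ∑ j ∈ N i, c i j
        = ∑ j ∈ (N i).filter P, c i j + ∑ j ∈ (N i).filter (fun j => ¬ P j), c i j :=
      (Finset.sum_filter_add_sum_filter_not (N i) P _).symm
    have hsplit2 : ∑ j ∈ N i, (c i j) ^ 2
        = ∑ j ∈ (N i).filter P, (c i j) ^ 2
          + ∑ j ∈ (N i).filter (fun j => ¬ P j), (c i j) ^ 2 :=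
      (Finset.sum_filter_add_sum_filter_not (N i) P _).symm
    have hcard1 : ((N i).filter P).card ≤ 1 := by
      rw [hN]
      rw [Finset.filter_filter]
      exact hE2 i
    have hcard2 : ((N i).filter (fun j => ¬ P j)).card ≤ 1 := by
      refine le_trans (Finset.card_le_card ?_) (hE3 i)
      intro j hj
      simp only [hN, hP, Finset.mem_filter, Finset.mem_univ, true_and] at hj ⊢
      exact ⟨hj.1, lt_of_le_of_ne (not_lt.mp hj.2) (hE1 i j hj.1)⟩
    have hsq1 := sq_sum_card_le_one _ hcard1 (c i)
    have hsq2 := sq_sum_card_le_one _ hcard2 (c i)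
    set A := ∑ j ∈ (N i).filter P, c i j with hA
    set B := ∑ j ∈ (N i).filter (fun j => ¬ P j), c i j with hB
    have hrhs : ∑ j ∈ N i, (-(f' i (x i)) * c i j + L i * (c i j) ^ 2)
        = -(f' i (x i)) * (A + B)
          + L i * (∑ j ∈ (N i).filter P, (c i j) ^ 2
            + ∑ j ∈ (N i).filter (fun j => ¬ P j), (c i j) ^ 2) := by
      rw [Finset.sum_add_distrib, ← Finset.mul_sum, ← Finset.mul_sum, hsplit, hsplit2]
    rw [hrhs]
    rw [hsplit] at hyi
    rw [hyi] at hdes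
    nlinarith [sq_nonneg (A - B), hL i, hdes, hsq1, hsq2]
  -- sum over nodes
  have hsum : ∑ i, f i (y i) ≤ ∑ i, f i (x i) +
      ∑ i, ∑ j ∈ N i, (-(f' i (x i)) * c i j + L i * (c i j) ^ 2) := by
    rw [← Finset.sum_add_distrib]
    exact Finset.sum_le_sum fun i _ => hnode i
  have hpair := sum_pairs E (fun i j => -(f' i (x i)) * c i j + L i * (c i j) ^ 2) hne
  rw [hN] at hsum
  rw [hpair] at hsum
  refine le_trans hsum ?_
  rw [sub_eq_add_neg, ← Finset.sum_neg_distrib]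
  refine add_le_add_right (le_of_eq (Finset.sum_congr rfl fun e _ => ?_)) _
  induction e using Sym2.ind with
  | _ a b =>
    simp only [Sym2.lift_mk]
    have hS : (0:ℝ) < L a + L b := add_pos (hL a) (hL b)
    have hS' : (L a + L b) ≠ 0 := ne_of_gt hS
    simp only [hc]
    have h2 : L b + L a = L a + L b := by ring
    rw [h2]
    field_simp
    ring
end

section
/- If y is obtained from x by a balancing step with pair set Ē, then Σ_{i=1}^n (L_i/2)(y_i − x_i)² ≤ Σ_{{i,j} ∈ Ē} (f_i'(x_i) − f_j'(x_j))² / (4(L_i + L_j)). -/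
/-!
Every node has at most two partners in `E`, so by Cauchy–Schwarz
`(y i - x i)² ≤ 2 ∑ⱼ a i j²` with `a i j = (f' i (x i) - f' j (x j)) / (2 (L i + L j))`.
Summing `L i / 2` times this over the nodes and regrouping by pairs, the pair `{i, j}`
contributes `(L i + L j) a i j² = (f' i (x i) - f' j (x j))² / (4 (L i + L j))`.
-/

open Finset

theorem Finset.sum_sum_filter_mk_mem_eq_sum_lift {α M : Type*} [Fintype α] [DecidableEq α]
    [AddCommMonoid M] (E : Finset (Sym2 α)) (hE : ∀ e ∈ E, ¬ e.IsDiag) (g : α → α → M) :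
    ∑ i, ∑ j with s(i, j) ∈ E, g i j =
      ∑ e ∈ E, Sym2.lift ⟨fun i j => g i j + g j i, fun _ _ => add_comm _ _⟩ e := by
  set P : Finset (α × α) := {p | s(p.1, p.2) ∈ E}
  calc ∑ i, ∑ j with s(i, j) ∈ E, g i j = ∑ p ∈ P, g p.1 p.2 := by
        simp only [P, sum_filter]
        exact (Fintype.sum_prod_type fun p : α × α =>
          if s(p.1, p.2) ∈ E then g p.1 p.2 else 0).symm
    _ = ∑ e ∈ E, ∑ p ∈ P with s(p.1, p.2) = e, g p.1 p.2 :=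
        (sum_fiberwise_of_maps_to (fun p hp => (mem_filter.1 hp).2) _).symm
    _ = _ := by
        refine sum_congr rfl fun e he => ?_
        induction e using Sym2.ind with
        | _ a b =>
          have hab : a ≠ b := fun h => hE _ he (Sym2.mk_isDiag_iff.2 h)
          have hfiber :
              ({p ∈ P | s(p.1, p.2) = s(a, b)} : Finset (α × α)) = {(a, b), (b, a)} := by
            ext ⟨i, j⟩
            simp only [P, mem_filter, mem_univ, true_and, mem_insert, mem_singleton,
              Prod.mk.injEq, Sym2.eq_iff]
            constructor
            · exact fun h => h.2
            · rintro (⟨rfl, rfl⟩ | ⟨rfl, rfl⟩)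
              · exact ⟨he, .inl ⟨rfl, rfl⟩⟩
              · exact ⟨Sym2.eq_swap ▸ he, .inr ⟨rfl, rfl⟩⟩
          rw [hfiber, sum_pair (by simp [hab]), Sym2.lift_mk]

namespace IsBalancingStep

variable {n : ℕ} {f' : Fin n → ℝ → ℝ} {L : Fin n → ℝ} {x y : Fin n → ℝ}
  {E : Finset (Sym2 (Fin n))}

theorem not_isDiag (h : IsBalancingStep n f' L x y E) : ∀ e ∈ E, ¬ e.IsDiag := by
  intro e he
  induction e using Sym2.ind with
  | _ i j => exact fun hij => h.1 i j he (by rw [Sym2.mk_isDiag_iff.1 hij])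

theorem card_partners_le_two (h : IsBalancingStep n f' L x y E) (i : Fin n) :
    #{j | s(i, j) ∈ E} ≤ 2 := by
  obtain ⟨hne, hdown, hup, -⟩ := h
  have hsplit : ({j | s(i, j) ∈ E} : Finset (Fin n)) ⊆
      ({j | s(i, j) ∈ E ∧ f' j (x j) < f' i (x i)} : Finset (Fin n)) ∪
        ({j | s(i, j) ∈ E ∧ f' i (x i) < f' j (x j)} : Finset (Fin n)) := by
    intro j hj
    have hj : s(i, j) ∈ E := (mem_filter.1 hj).2
    rcases (hne i j hj).lt_or_gt with hlt | hgt
    · exact mem_union_right _ (mem_filter.2 ⟨mem_univ _, hj, hlt⟩)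
    · exact mem_union_left _ (mem_filter.2 ⟨mem_univ _, hj, hgt⟩)
  calc #{j | s(i, j) ∈ E} ≤ _ := card_le_card hsplit
    _ ≤ _ := card_union_le _ _
    _ ≤ 1 + 1 := add_le_add (hdown i) (hup i)

theorem half_mul_sq_sub_le (h : IsBalancingStep n f' L x y E) {i : Fin n} (hLi : 0 ≤ L i) :
    L i / 2 * (y i - x i) ^ 2 ≤
      ∑ j with s(i, j) ∈ E, L i * ((f' i (x i) - f' j (x j)) / (2 * (L i + L j))) ^ 2 := by
  set a : Fin n → ℝ := fun j => (f' i (x i) - f' j (x j)) / (2 * (L i + L j))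
  have hcard : (#{j | s(i, j) ∈ E} : ℝ) ≤ 2 := by exact_mod_cast h.card_partners_le_two i
  have hsq : (y i - x i) ^ 2 ≤ 2 * ∑ j with s(i, j) ∈ E, a j ^ 2 := by
    rw [h.2.2.2 i, sub_sub_cancel_left, neg_sq]
    exact sq_sum_le_card_mul_sum_sq.trans
      (mul_le_mul_of_nonneg_right hcard (sum_nonneg fun j _ => sq_nonneg (a j)))
  calc L i / 2 * (y i - x i) ^ 2 ≤ L i / 2 * (2 * ∑ j with s(i, j) ∈ E, a j ^ 2) :=
        mul_le_mul_of_nonneg_left hsq (by positivity)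
    _ = ∑ j with s(i, j) ∈ E, L i * a j ^ 2 := by rw [mul_sum, mul_sum]; ring_nf

end IsBalancingStep

/-- If y is obtained from x by a balancing step with pair set E, then
Σ_i (L_i/2)(y_i − x_i)² ≤ Σ_{{i,j} ∈ E} (f_i'(x_i) − f_j'(x_j))² / (4(L_i + L_j)). -/
theorem stmt_7 (n : ℕ) (f' : Fin n → ℝ → ℝ) (L : Fin n → ℝ)
    (hL : ∀ i, 0 < L i)
    (x y : Fin n → ℝ) (E : Finset (Sym2 (Fin n)))
    (hstep : IsBalancingStep n f' L x y E) :
    ∑ i, L i / 2 * (y i - x i) ^ 2 ≤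
      ∑ e ∈ E, Sym2.lift
        ⟨fun i j => (f' i (x i) - f' j (x j)) ^ 2 / (4 * (L i + L j)),
          by intro a b; ring_nf⟩ e := by
  set a : Fin n → Fin n → ℝ := fun i j => (f' i (x i) - f' j (x j)) / (2 * (L i + L j))
  calc ∑ i, L i / 2 * (y i - x i) ^ 2 ≤ ∑ i, ∑ j with s(i, j) ∈ E, L i * a i j ^ 2 :=
        sum_le_sum fun i _ => hstep.half_mul_sq_sub_le (hL i).le
    _ = ∑ e ∈ E, Sym2.lift ⟨fun i j => L i * a i j ^ 2 + L j * a j i ^ 2, _⟩ e :=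
        sum_sum_filter_mk_mem_eq_sum_lift E hstep.not_isDiag _
    _ = _ := by
        refine sum_congr rfl fun e _ => ?_
        induction e using Sym2.ind with
        | _ i j =>
          have hLij : L i + L j ≠ 0 := (add_pos (hL i) (hL j)).ne'
          simp only [Sym2.lift_mk, a, add_comm (L j) (L i)]
          field_simp
          ring
end

section
/- Let B ≥ 1 and ℓ ≥ 0 be integers, and let x(ℓB), x(ℓB+1), …, x((ℓ+1)B) be states such that each x(k+1) is obtained from x(k) by a balancing step with pair set Ē(k). Relabel the nodes so that f_1'(x_1(ℓB)) ≥ … ≥ f_n'(x_n(ℓB)), and suppose that for every d ∈ {1,…,n−1} with f_d'(x_d(ℓB)) > f_{d+1}'(x_{d+1}(ℓB)) there is a time k ∈ {ℓB,…,(ℓ+1)B−1} and a pair in Ē(k) with one endpoint in {1,…,d} and the other in {d+1,…,n}. Then Σ_{k=ℓB}^{(ℓ+1)B−1} Σ_{{i,j} ∈ Ē(k)} (f_i'(x_i(k)) − f_j'(x_j(k)))² ≥ Σ_{d=1}^{n−1} (f_d'(x_d(ℓB)) − f_{d+1}'(x_{d+1}(ℓB)))². -/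
private lemma telescope_Ico (G : ℕ → ℝ) {a b : ℕ} (h : a ≤ b) :
    ∑ d ∈ Finset.Ico a b, (G d - G (d + 1)) = G a - G b := by
  induction b, h using Nat.le_induction with
  | base => simp
  | succ b hb ih => rw [Finset.sum_Ico_succ_top (by omega), ih]; ring

/-- If all nodes satisfying `P` have derivative at least `c`, and no edge leaves the set
`P`, then after one balancing step all nodes satisfying `P` still have derivative
at least `c`. -/
private lemma bal_step_lower (n : ℕ) (f' : Fin n → ℝ → ℝ) (L : Fin n → ℝ)
    (hL : ∀ i, 0 < L i)
    (hmono : ∀ i, Monotone (f' i))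
    (hlip : ∀ i, ∀ a b : ℝ, |f' i a - f' i b| ≤ L i * |a - b|)
    (x y : Fin n → ℝ) (Ek : Finset (Sym2 (Fin n)))
    (hbs : IsBalancingStep n f' L x y Ek)
    (P : Fin n → Prop)
    (hclosed : ∀ i j : Fin n, s(i, j) ∈ Ek → (P i ↔ P j))
    (c : ℝ) (hc : ∀ i, P i → c ≤ f' i (x i)) :
    ∀ i, P i → c ≤ f' i (y i) := by
  classical
  obtain ⟨hne, hlo, _, heq⟩ := hbs
  intro i hi
  set t : Fin n → ℝ := fun j => (f' i (x i) - f' j (x j)) / (2 * (L i + L j)) with ht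
  set T := Finset.univ.filter (fun j => s(i, j) ∈ Ek) with hT
  set Tp := Finset.univ.filter (fun j => s(i, j) ∈ Ek ∧ f' j (x j) < f' i (x i)) with hTp
  set s := ∑ j ∈ Tp, t j with hs
  have hsplit : T.filter (fun j => f' j (x j) < f' i (x i)) = Tp := by
    rw [hT, Finset.filter_filter]
  have hTsum : ∑ j ∈ T, t j ≤ s := by
    rw [← Finset.sum_filter_add_sum_filter_not T (fun j => f' j (x j) < f' i (x i)) t, hsplit]
    have hneg : ∑ j ∈ T.filter (fun j => ¬ f' j (x j) < f' i (x i)), t j ≤ 0 := by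
      apply Finset.sum_nonpos
      intro j hj
      simp only [hT, Finset.mem_filter, Finset.mem_univ, true_and] at hj
      have hlt : f' i (x i) < f' j (x j) := lt_of_le_of_ne (not_lt.mp hj.2) (hne i j hj.1)
      have hD : (0:ℝ) < 2 * (L i + L j) := by have := hL i; have := hL j; linarith
      exact div_nonpos_of_nonpos_of_nonneg (by linarith) (le_of_lt hD)
    linarith
  have hs0 : 0 ≤ s := by
    apply Finset.sum_nonneg
    intro j hj
    simp only [hTp, Finset.mem_filter, Finset.mem_univ, true_and] at hj
    have hD : (0:ℝ) < 2 * (L i + L j) := by have := hL i; have := hL j; linarith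
    exact div_nonneg (by linarith [hj.2]) (le_of_lt hD)
  have key : c ≤ f' i (x i) - L i * s := by
    rcases Finset.eq_empty_or_nonempty Tp with h | h
    · rw [hs, h]; simpa using hc i hi
    · have hcard : Tp.card = 1 := le_antisymm (hlo i) (Finset.card_pos.mpr h)
      obtain ⟨j, hj⟩ := Finset.card_eq_one.mp hcard
      have hjmem : j ∈ Tp := by rw [hj]; exact Finset.mem_singleton_self j
      simp only [hTp, Finset.mem_filter, Finset.mem_univ, true_and] at hjmem
      have hPj : P j := (hclosed i j hjmem.1).mp hi
      have hcj : c ≤ f' j (x j) := hc j hPj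
      have hsval : s = t j := by rw [hs, hj, Finset.sum_singleton]
      have hD : (0:ℝ) < 2 * (L i + L j) := by have := hL i; have := hL j; linarith
      have hq : t j * (2 * (L i + L j)) = f' i (x i) - f' j (x j) :=
        div_mul_cancel₀ _ (ne_of_gt hD)
      have hq0 : 0 ≤ t j := div_nonneg (by linarith [hjmem.2]) (le_of_lt hD)
      have hLj := hL j
      rw [hsval]
      nlinarith [hjmem.2, hL i]
  have hyge : x i - s ≤ y i := by rw [heq i]; simp only [← hT]; linarith
  have hmon := hmono i hyge
  have hlip' := hlip i (x i - s) (x i)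
  have habs : |x i - s - x i| = s := by
    rw [show x i - s - x i = -s by ring, abs_neg, abs_of_nonneg hs0]
  rw [habs] at hlip'
  have := (abs_le.mp hlip').1
  linarith

/-- Mirror image of `bal_step_lower`. -/
private lemma bal_step_upper (n : ℕ) (f' : Fin n → ℝ → ℝ) (L : Fin n → ℝ)
    (hL : ∀ i, 0 < L i)
    (hmono : ∀ i, Monotone (f' i))
    (hlip : ∀ i, ∀ a b : ℝ, |f' i a - f' i b| ≤ L i * |a - b|)
    (x y : Fin n → ℝ) (Ek : Finset (Sym2 (Fin n)))
    (hbs : IsBalancingStep n f' L x y Ek)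
    (P : Fin n → Prop)
    (hclosed : ∀ i j : Fin n, s(i, j) ∈ Ek → (P i ↔ P j))
    (c : ℝ) (hc : ∀ i, P i → f' i (x i) ≤ c) :
    ∀ i, P i → f' i (y i) ≤ c := by
  classical
  obtain ⟨hne, _, hhi, heq⟩ := hbs
  intro i hi
  set t : Fin n → ℝ := fun j => (f' i (x i) - f' j (x j)) / (2 * (L i + L j)) with ht
  set T := Finset.univ.filter (fun j => s(i, j) ∈ Ek) with hT
  set Tm := Finset.univ.filter (fun j => s(i, j) ∈ Ek ∧ f' i (x i) < f' j (x j)) with hTm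
  set s := ∑ j ∈ Tm, t j with hs
  have hsplit : T.filter (fun j => f' i (x i) < f' j (x j)) = Tm := by
    rw [hT, Finset.filter_filter]
  have hTsum : s ≤ ∑ j ∈ T, t j := by
    rw [← Finset.sum_filter_add_sum_filter_not T (fun j => f' i (x i) < f' j (x j)) t, hsplit]
    have hpos : 0 ≤ ∑ j ∈ T.filter (fun j => ¬ f' i (x i) < f' j (x j)), t j := by
      apply Finset.sum_nonneg
      intro j hj
      simp only [hT, Finset.mem_filter, Finset.mem_univ, true_and] at hj
      have hlt : f' j (x j) < f' i (x i) := lt_of_le_of_ne (not_lt.mp hj.2) (hne j i (by rw [Sym2.eq_swap]; exact hj.1))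
      have hD : (0:ℝ) < 2 * (L i + L j) := by have := hL i; have := hL j; linarith
      exact div_nonneg (by linarith) (le_of_lt hD)
    linarith
  have hs0 : s ≤ 0 := by
    apply Finset.sum_nonpos
    intro j hj
    simp only [hTm, Finset.mem_filter, Finset.mem_univ, true_and] at hj
    have hD : (0:ℝ) < 2 * (L i + L j) := by have := hL i; have := hL j; linarith
    exact div_nonpos_of_nonpos_of_nonneg (by linarith [hj.2]) (le_of_lt hD)
  have key : f' i (x i) - L i * s ≤ c := by
    rcases Finset.eq_empty_or_nonempty Tm with h | h
    · rw [hs, h]; simpa using hc i hi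
    · have hcard : Tm.card = 1 := le_antisymm (hhi i) (Finset.card_pos.mpr h)
      obtain ⟨j, hj⟩ := Finset.card_eq_one.mp hcard
      have hjmem : j ∈ Tm := by rw [hj]; exact Finset.mem_singleton_self j
      simp only [hTm, Finset.mem_filter, Finset.mem_univ, true_and] at hjmem
      have hPj : P j := (hclosed i j hjmem.1).mp hi
      have hcj : f' j (x j) ≤ c := hc j hPj
      have hsval : s = t j := by rw [hs, hj, Finset.sum_singleton]
      have hD : (0:ℝ) < 2 * (L i + L j) := by have := hL i; have := hL j; linarith
      have hq : t j * (2 * (L i + L j)) = f' i (x i) - f' j (x j) :=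
        div_mul_cancel₀ _ (ne_of_gt hD)
      have hq0 : t j ≤ 0 :=
        div_nonpos_of_nonpos_of_nonneg (by linarith [hjmem.2]) (le_of_lt hD)
      have hLj := hL j
      rw [hsval]
      nlinarith [hjmem.2, hL i]
  have hyle : y i ≤ x i - s := by rw [heq i]; simp only [← hT]; linarith
  have hmon := hmono i hyle
  have hlip' := hlip i (x i - s) (x i)
  have habs : |x i - s - x i| = -s := by
    rw [show x i - s - x i = -s by ring, abs_of_nonneg (by linarith)]
  rw [habs] at hlip'
  have := (abs_le.mp hlip').2
  nlinarith [hL i]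

/-- Along balancing steps during times ℓB,…,(ℓ+1)B−1, with nodes labeled
so that the derivatives at time ℓB are nonincreasing, if every cut with a strict gap
of derivatives at time ℓB is crossed by some pair used during that window, then
Σ_{k=ℓB}^{(ℓ+1)B−1} Σ_{{i,j} ∈ E(k)} (f_i'(x_i(k)) − f_j'(x_j(k)))²
  ≥ Σ_{d=1}^{n−1} (f_d'(x_d(ℓB)) − f_{d+1}'(x_{d+1}(ℓB)))².
(Nodes are 0-indexed: the cut d separates {0,…,d} from {d+1,…,n−1}.) -/
theorem stmt_8 (n : ℕ) (hn : 0 < n) (f f' : Fin n → ℝ → ℝ) (L : Fin n → ℝ)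
    (hL : ∀ i, 0 < L i)
    (hconv : ∀ i, ConvexOn ℝ Set.univ (f i))
    (hderiv : ∀ i t, HasDerivAt (f i) (f' i t) t)
    (hlip : ∀ i, ∀ a b : ℝ, |f' i a - f' i b| ≤ L i * |a - b|)
    (B : ℕ) (hB : 1 ≤ B) (ℓ : ℕ)
    (x : ℕ → Fin n → ℝ) (E : ℕ → Finset (Sym2 (Fin n)))
    (hstep : ∀ k, ℓ * B ≤ k → k < (ℓ + 1) * B →
      IsBalancingStep n f' L (x k) (x (k + 1)) (E k))
    (hsort : ∀ i j : Fin n, i ≤ j → f' j (x (ℓ * B) j) ≤ f' i (x (ℓ * B) i))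
    (hcross : ∀ d : Fin n, ∀ hd : (d : ℕ) + 1 < n,
      f' ⟨(d : ℕ) + 1, hd⟩ (x (ℓ * B) ⟨(d : ℕ) + 1, hd⟩) < f' d (x (ℓ * B) d) →
      ∃ k : ℕ, ℓ * B ≤ k ∧ k < (ℓ + 1) * B ∧
        ∃ i j : Fin n, s(i, j) ∈ E k ∧ i ≤ d ∧ d < j) :
    ∑ d ∈ (Finset.range (n - 1)).attach,
      (f' ⟨d.1, by have := Finset.mem_range.mp d.2; omega⟩
          (x (ℓ * B) ⟨d.1, by have := Finset.mem_range.mp d.2; omega⟩) -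
        f' ⟨d.1 + 1, by have := Finset.mem_range.mp d.2; omega⟩
          (x (ℓ * B) ⟨d.1 + 1, by have := Finset.mem_range.mp d.2; omega⟩)) ^ 2 ≤
    ∑ k ∈ Finset.Ico (ℓ * B) ((ℓ + 1) * B),
      ∑ e ∈ E k, Sym2.lift
        ⟨fun i j => (f' i (x k i) - f' j (x k j)) ^ 2, by intro a b; ring_nf⟩ e := by
  classical
  set m := ℓ * B with hm
  -- monotonicity of each derivative
  have hmono : ∀ i, Monotone (f' i) := by
    intro i a b hab
    rcases eq_or_lt_of_le hab with rfl | h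
    · exact le_refl _
    · exact le_trans
        ((hconv i).le_slope_of_hasDerivAt (Set.mem_univ a) (Set.mem_univ b) h (hderiv i a))
        ((hconv i).slope_le_of_hasDerivAt (Set.mem_univ a) (Set.mem_univ b) h (hderiv i b))
  -- derivative profile at time m, extended by junk
  set G : ℕ → ℝ := fun d => if h : d < n then f' ⟨d, h⟩ (x m ⟨d, h⟩) else 0 with hG
  have hGval : ∀ (d : ℕ) (h : d < n), G d = f' ⟨d, h⟩ (x m ⟨d, h⟩) := by
    intro d h; rw [hG]; exact dif_pos h
  have gapnn : ∀ d : ℕ, d + 1 < n → 0 ≤ G d - G (d + 1) := by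
    intro d hd
    rw [hGval d (by omega), hGval (d + 1) hd]
    have := hsort ⟨d, by omega⟩ ⟨d + 1, hd⟩ (by simp [Fin.mk_le_mk])
    linarith
  -- the invariant along the window
  have inv : ∀ (d : ℕ), d + 1 < n → ∀ (k : ℕ), m ≤ k → k ≤ (ℓ + 1) * B →
      (∀ k', m ≤ k' → k' < k → ∀ i j : Fin n, s(i, j) ∈ E k' →
        (((i : ℕ) ≤ d) ↔ ((j : ℕ) ≤ d))) →
      (∀ i : Fin n, (i : ℕ) ≤ d → G d ≤ f' i (x k i)) ∧
      (∀ j : Fin n, d < (j : ℕ) → f' j (x k j) ≤ G (d + 1)) := by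
    intro d hd k hk
    induction k, hk using Nat.le_induction with
    | base =>
      intro _ _
      constructor
      · intro i hi
        rw [hGval d (by omega)]
        exact hsort i ⟨d, by omega⟩ (by rwa [Fin.le_def])
      · intro j hj
        rw [hGval (d + 1) hd]
        exact hsort ⟨d + 1, hd⟩ j (by rw [Fin.le_def]; simpa using hj)
    | succ k hk ih =>
      intro hk2 hnc
      have ihh := ih (by omega) (fun k' h1 h2 => hnc k' h1 (by omega))
      have hbs := hstep k hk (by omega)
      have hcl : ∀ i j : Fin n, s(i, j) ∈ E k → (((i : ℕ) ≤ d) ↔ ((j : ℕ) ≤ d)) :=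
        fun i j h => hnc k hk (by omega) i j h
      constructor
      · exact bal_step_lower n f' L hL hmono hlip (x k) (x (k + 1)) (E k) hbs
          (fun i => (i : ℕ) ≤ d) hcl (G d) ihh.1
      · refine bal_step_upper n f' L hL hmono hlip (x k) (x (k + 1)) (E k) hbs
          (fun j => d < (j : ℕ)) ?_ (G (d + 1)) ihh.2
        intro i j h
        have h2 := hcl i j h
        simp only [← not_le]
        exact not_congr h2
  -- first-crossing witnesses
  have hex : ∀ d : ℕ, ∃ p : ℕ × Fin n × Fin n,
      d + 1 < n → 0 < G d - G (d + 1) →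
      (m ≤ p.1 ∧ p.1 < (ℓ + 1) * B ∧ s(p.2.1, p.2.2) ∈ E p.1 ∧
        (p.2.1 : ℕ) ≤ d ∧ d < (p.2.2 : ℕ) ∧
        ∀ k', m ≤ k' → k' < p.1 → ∀ i j : Fin n, s(i, j) ∈ E k' →
          ¬((i : ℕ) ≤ d ∧ d < (j : ℕ))) := by
    intro d
    by_cases hd : d + 1 < n ∧ 0 < G d - G (d + 1)
    · obtain ⟨hd1, hd2⟩ := hd
      rw [hGval d (by omega), hGval (d + 1) hd1] at hd2
      have hlt : f' ⟨d + 1, hd1⟩ (x m ⟨d + 1, hd1⟩) <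
          f' ⟨d, by omega⟩ (x m ⟨d, by omega⟩) := by linarith
      obtain ⟨k0, hk0a, hk0b, i0, j0, he0, hi0, hj0⟩ :=
        hcross ⟨d, by omega⟩ hd1 hlt
      have hQ : ∃ k : ℕ, m ≤ k ∧ k < (ℓ + 1) * B ∧
          ∃ i j : Fin n, s(i, j) ∈ E k ∧ (i : ℕ) ≤ d ∧ d < (j : ℕ) :=
        ⟨k0, hk0a, hk0b, i0, j0, he0, by rwa [Fin.le_def] at hi0, by rwa [Fin.lt_def] at hj0⟩
      have hKspec := Nat.find_spec hQ
      obtain ⟨hK1, hK2, i1, j1, he1, hi1, hj1⟩ := hKspec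
      refine ⟨(Nat.find hQ, i1, j1), fun _ _ => ⟨hK1, hK2, he1, hi1, hj1, ?_⟩⟩
      intro k' h1 h2 i j he hij
      exact Nat.find_min hQ h2 ⟨h1, by omega, i, j, he, hij.1, hij.2⟩
    · exact ⟨(0, ⟨0, hn⟩, ⟨0, hn⟩), fun h1 h2 => absurd ⟨h1, h2⟩ hd⟩
  choose w hw using hex
  set D := (Finset.range (n - 1)).filter (fun d => 0 < G d - G (d + 1)) with hD
  have hmemD : ∀ d ∈ D, d + 1 < n ∧ 0 < G d - G (d + 1) := by
    intro d hd
    simp only [hD, Finset.mem_filter, Finset.mem_range] at hd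
    exact ⟨by omega, hd.2⟩
  set sig : ℕ → (_ : ℕ) × Sym2 (Fin n) :=
    fun d => ⟨(w d).1, s((w d).2.1, (w d).2.2)⟩ with hsig
  set S := (Finset.Ico m ((ℓ + 1) * B)).sigma E with hS
  have hmaps : ∀ d ∈ D, sig d ∈ S := by
    intro d hd
    obtain ⟨h1, h2⟩ := hmemD d hd
    obtain ⟨ha, hb, hc', -⟩ := hw d h1 h2
    simp only [hS, hsig, Finset.mem_sigma, Finset.mem_Ico]
    exact ⟨⟨ha, hb⟩, hc'⟩
  -- key bound per fiber
  have keyb : ∀ p ∈ S, ∑ d ∈ D.filter (fun d => sig d = p), (G d - G (d + 1)) ^ 2 ≤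
      Sym2.lift ⟨fun i j => (f' i (x p.1 i) - f' j (x p.1 j)) ^ 2,
        by intro a b; ring_nf⟩ p.2 := by
    intro p hp
    obtain ⟨pk, pe⟩ := p
    set Φ := D.filter (fun d => sig d = (⟨pk, pe⟩ : (_ : ℕ) × Sym2 (Fin n))) with hΦ
    have hΦprop : ∀ d ∈ Φ, d + 1 < n ∧ 0 < G d - G (d + 1) ∧
        (w d).1 = pk ∧ s((w d).2.1, (w d).2.2) = pe := by
      intro d hd
      rw [hΦ, Finset.mem_filter] at hd
      obtain ⟨hd1, hd2⟩ := hd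
      have h12 := hmemD d hd1
      simp only [hsig] at hd2
      exact ⟨h12.1, h12.2, congrArg (fun q : (_ : ℕ) × Sym2 (Fin n) => q.1) hd2,
        congrArg (fun q : (_ : ℕ) × Sym2 (Fin n) => q.2) hd2⟩
    rcases Finset.eq_empty_or_nonempty Φ with hE0 | hne0
    · rw [hE0]
      simp only [Finset.sum_empty]
      induction pe using Sym2.ind with
      | _ a b => rw [Sym2.lift_mk]; positivity
    · have hdminΦ := Finset.min'_mem Φ hne0
      have hdmaxΦ := Finset.max'_mem Φ hne0
      set dmin := Φ.min' hne0 with hdmin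
      set dmax := Φ.max' hne0 with hdmax
      obtain ⟨hmin1, hmin2, hminK, hminE⟩ := hΦprop dmin hdminΦ
      obtain ⟨hmax1, hmax2, hmaxK, hmaxE⟩ := hΦprop dmax hdmaxΦ
      have hwmin := hw dmin hmin1 hmin2
      have hwmax := hw dmax hmax1 hmax2
      rw [hminK] at hwmin
      rw [hmaxK] at hwmax
      set i0 := (w dmin).2.1 with hi0d
      set j0 := (w dmin).2.2 with hj0d
      set i1 := (w dmax).2.1 with hi1d
      set j1 := (w dmax).2.2 with hj1d
      have hedge : s(i0, j0) = s(i1, j1) := hminE.trans hmaxE.symm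
      have hdmm : dmin ≤ dmax := Finset.min'_le Φ dmax hdmaxΦ
      have hA : (i0 : ℕ) ≤ dmin := hwmin.2.2.2.1
      have hB' : dmin < (j0 : ℕ) := hwmin.2.2.2.2.1
      have hC : (i1 : ℕ) ≤ dmax := hwmax.2.2.2.1
      have hD' : dmax < (j1 : ℕ) := hwmax.2.2.2.2.1
      have hii : i1 = i0 ∧ j1 = j0 := by
        rcases Sym2.eq_iff.mp hedge with ⟨h1, h2⟩ | ⟨h1, h2⟩
        · exact ⟨h1.symm, h2.symm⟩
        · exfalso
          have e1 : (i0 : ℕ) = (j1 : ℕ) := congrArg Fin.val h1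
          have e2 : (j0 : ℕ) = (i1 : ℕ) := congrArg Fin.val h2
          omega
      have hsub : Φ ⊆ Finset.Ico dmin (dmax + 1) := by
        intro d hd
        rw [Finset.mem_Ico]
        have h1 := Finset.min'_le Φ d hd
        have h2 := Finset.le_max' Φ d hd
        omega
      have hsum1 : ∑ d ∈ Φ, (G d - G (d + 1)) ≤ G dmin - G (dmax + 1) := by
        rw [← telescope_Ico G (by omega : dmin ≤ dmax + 1)]
        refine Finset.sum_le_sum_of_subset_of_nonneg hsub ?_
        intro d hd _
        rw [Finset.mem_Ico] at hd
        exact gapnn d (by omega)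
      have hinv1 := inv dmin hmin1 pk hwmin.1 (le_of_lt hwmin.2.1) (by
        intro k' h1 h2 i j he
        have h3 := hwmin.2.2.2.2.2 k' h1 h2 i j he
        have h4 := hwmin.2.2.2.2.2 k' h1 h2 j i (by rw [Sym2.eq_swap]; exact he)
        omega)
      have hinv2 := inv dmax hmax1 pk hwmax.1 (le_of_lt hwmax.2.1) (by
        intro k' h1 h2 i j he
        have h3 := hwmax.2.2.2.2.2 k' h1 h2 i j he
        have h4 := hwmax.2.2.2.2.2 k' h1 h2 j i (by rw [Sym2.eq_swap]; exact he)
        omega)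
      have hlow : G dmin ≤ f' i0 (x pk i0) := hinv1.1 i0 hA
      have hhigh : f' j0 (x pk j0) ≤ G (dmax + 1) := by
        have := hinv2.2 j1 hD'
        rwa [hii.2] at this
      have hΔ : ∑ d ∈ Φ, (G d - G (d + 1)) ≤ f' i0 (x pk i0) - f' j0 (x pk j0) := by
        linarith
      have hsnn : 0 ≤ ∑ d ∈ Φ, (G d - G (d + 1)) :=
        Finset.sum_nonneg (fun d hd => (hΦprop d hd).2.1.le)
      calc ∑ d ∈ Φ, (G d - G (d + 1)) ^ 2
          ≤ (∑ d ∈ Φ, (G d - G (d + 1))) ^ 2 :=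
            Finset.sum_sq_le_sq_sum_of_nonneg (fun d hd => (hΦprop d hd).2.1.le)
        _ ≤ (f' i0 (x pk i0) - f' j0 (x pk j0)) ^ 2 := pow_le_pow_left₀ hsnn hΔ 2
        _ = Sym2.lift ⟨fun i j => (f' i (x pk i) - f' j (x pk j)) ^ 2,
              by intro a b; ring_nf⟩ pe := by rw [← hminE, Sym2.lift_mk]
  -- assemble
  refine Eq.trans_le (b := ∑ d ∈ Finset.range (n - 1), (G d - G (d + 1)) ^ 2) ?_ ?_
  · rw [← Finset.sum_attach (Finset.range (n - 1)) (fun d => (G d - G (d + 1)) ^ 2)]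
    refine Finset.sum_congr rfl ?_
    intro d _
    have hdlt := Finset.mem_range.mp d.2
    rw [hGval d.1 (by omega), hGval (d.1 + 1) (by omega)]
  · have hsplit2 : ∑ d ∈ Finset.range (n - 1), (G d - G (d + 1)) ^ 2 =
        ∑ d ∈ D, (G d - G (d + 1)) ^ 2 := by
      rw [hD, ← Finset.sum_filter_add_sum_filter_not (Finset.range (n - 1))
        (fun d => 0 < G d - G (d + 1)) (fun d => (G d - G (d + 1)) ^ 2)]
      have hz : ∑ d ∈ (Finset.range (n - 1)).filter (fun d => ¬ 0 < G d - G (d + 1)),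
          (G d - G (d + 1)) ^ 2 = 0 := by
        apply Finset.sum_eq_zero
        intro d hd
        simp only [Finset.mem_filter, Finset.mem_range] at hd
        have h0 := gapnn d (by omega)
        have : G d - G (d + 1) = 0 := le_antisymm (not_lt.mp hd.2) h0
        rw [this]; ring
      rw [hz, add_zero]
    have hfib : ∑ d ∈ D, (G d - G (d + 1)) ^ 2 =
        ∑ p ∈ S, ∑ d ∈ D.filter (fun d => sig d = p), (G d - G (d + 1)) ^ 2 :=
      (Finset.sum_fiberwise_of_maps_to hmaps _).symm
    rw [hsplit2, hfib]
    exact le_trans (Finset.sum_le_sum keyb) (le_of_eq (Finset.sum_sigma _ _ _))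
end

section
/- Let n ≥ 1 and let s_1 ≥ s_2 ≥ … ≥ s_n be real numbers with s_1 ≥ 0 and s_n ≤ 0. Then Σ_{i=1}^{n−1} (s_i − s_{i+1})² ≥ (1/n²) Σ_{i=1}^n s_i². -/
/-- If s_1 ≥ s_2 ≥ … ≥ s_n with s_1 ≥ 0 and s_n ≤ 0 (n ≥ 1), then
Σ_{i=1}^{n−1} (s_i − s_{i+1})² ≥ (1/n²) Σ_{i=1}^n s_i². -/
theorem stmt_10 (n : ℕ) (hn : 1 ≤ n) (s : ℕ → ℝ)
    (hmono : ∀ i j : ℕ, 1 ≤ i → i ≤ j → j ≤ n → s j ≤ s i)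
    (h1 : 0 ≤ s 1) (hlast : s n ≤ 0) :
    (1 / (n : ℝ) ^ 2) * ∑ i ∈ Finset.Icc 1 n, s i ^ 2 ≤
      ∑ i ∈ Finset.Icc 1 (n - 1), (s i - s (i + 1)) ^ 2 := by
  set D := ∑ i ∈ Finset.Icc 1 (n-1), (s i - s (i+1)) ^ 2 with hDdef
  have hDnn : 0 ≤ D := Finset.sum_nonneg fun i _ => sq_nonneg _
  have hT : ∑ i ∈ Finset.Icc 1 (n-1), (s i - s (i+1)) = s 1 - s n := by
    have hmap : Finset.Icc 1 (n-1) =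
        Finset.map ⟨fun k => k+1, add_left_injective 1⟩ (Finset.range (n-1)) := by
      ext x; simp only [Finset.mem_Icc, Finset.mem_map, Finset.mem_range,
        Function.Embedding.coeFn_mk]
      constructor
      · rintro ⟨ha, hb⟩; exact ⟨x-1, by omega, by omega⟩
      · rintro ⟨a, ha, rfl⟩; omega
    rw [hmap, Finset.sum_map]
    simp only [Function.Embedding.coeFn_mk]
    have := Finset.sum_range_sub' (fun k => s (k+1)) (n-1)
    simpa [Nat.sub_add_cancel hn] using this
  have hCS : (s 1 - s n)^2 ≤ ((n:ℝ)-1) * D := by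
    rw [← hT]
    have := sq_sum_le_card_mul_sum_sq (s := Finset.Icc 1 (n-1))
      (f := fun i => s i - s (i+1))
    have hcard : (Finset.Icc 1 (n-1)).card = n - 1 := by
      rw [Nat.card_Icc]; omega
    rw [hcard] at this
    calc (∑ i ∈ Finset.Icc 1 (n-1), (s i - s (i+1)))^2
        ≤ ((n-1 : ℕ) : ℝ) * D := this
      _ = ((n:ℝ)-1) * D := by rw [Nat.cast_sub hn]; norm_num
  have hsq : ∀ i ∈ Finset.Icc 1 n, s i ^ 2 ≤ (s 1 - s n)^2 := by
    intro i hi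
    rw [Finset.mem_Icc] at hi
    have hub : s i ≤ s 1 := hmono 1 i le_rfl hi.1 hi.2
    have hlb : s n ≤ s i := hmono i n hi.1 hi.2 le_rfl
    apply sq_le_sq' <;> linarith
  have hsum : ∑ i ∈ Finset.Icc 1 n, s i ^ 2 ≤ (n:ℝ) * (s 1 - s n)^2 := by
    calc ∑ i ∈ Finset.Icc 1 n, s i ^ 2
        ≤ ∑ _i ∈ Finset.Icc 1 n, (s 1 - s n)^2 := Finset.sum_le_sum hsq
      _ = (n:ℝ) * (s 1 - s n)^2 := by
          rw [Finset.sum_const, Nat.card_Icc]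
          simp [nsmul_eq_mul]
  have hn1 : (1:ℝ) ≤ n := by exact_mod_cast hn
  rw [one_div, inv_mul_le_iff₀ (by positivity)]
  nlinarith [sq_nonneg (s 1 - s n)]
end

section
/- Let x, x* ∈ ℝ^n with Σ_{i=1}^n x_i = Σ_{i=1}^n x_i*, and suppose the derivatives f_i'(x_i*) all equal a common value (i.e., f_i'(x_i*) = f_j'(x_j*) for all i, j). Then F(x) − F(x*) ≤ ‖x − x*‖₂ · ‖∇F(x) − ∇F(x*)‖₂, where ∇F(x) denotes the vector (f_1'(x_1), …, f_n'(x_n)). -/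
/-!
Convexity puts each `f i` above its tangent at `x i`, so `F(x) - F(x*)` is at most
`∑ f_i'(x_i) (x_i - x_i*)`. Since the `f_i'(x_i*)` share a common value and `x - x*` sums to
zero, subtracting `∑ f_i'(x_i*) (x_i - x_i*) = 0` leaves `⟪∇F(x) - ∇F(x*), x - x*⟫`, which
Cauchy–Schwarz bounds by the product of the norms.
-/

open Finset

lemma ConvexOn.sub_le_mul_sub_of_hasDerivAt {S : Set ℝ} {f : ℝ → ℝ} {a b f'b : ℝ}
    (hf : ConvexOn ℝ S f) (ha : a ∈ S) (hb : b ∈ S) (hderiv : HasDerivAt f f'b b) :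
    f b - f a ≤ f'b * (b - a) := by
  rcases lt_trichotomy a b with hab | rfl | hba
  · have hslope := hf.slope_le_of_hasDerivAt ha hb hab hderiv
    rw [slope_def_field, div_le_iff₀ (sub_pos.mpr hab)] at hslope
    linarith
  · simp
  · have hslope := hf.le_slope_of_hasDerivAt hb ha hba hderiv
    rw [slope_def_field, le_div_iff₀ (sub_pos.mpr hba)] at hslope
    linarith

lemma Finset.sum_mul_eq_zero_of_forall_eq {ι : Type*} [Fintype ι] {c d : ι → ℝ}
    (hc : ∀ i j, c i = c j) (hd : ∑ i, d i = 0) : ∑ i, c i * d i = 0 := by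
  cases isEmpty_or_nonempty ι with
  | inl _ => simp
  | inr hne =>
    obtain ⟨i₀⟩ := hne
    rw [sum_congr rfl fun i _ => by rw [hc i i₀], ← mul_sum, hd, mul_zero]

theorem stmt_11_general (n : ℕ) (f f' : Fin n → ℝ → ℝ)
    (hconv : ∀ i, ConvexOn ℝ Set.univ (f i))
    (hderiv : ∀ i t, HasDerivAt (f i) (f' i t) t)
    (x xs : Fin n → ℝ)
    (hsum : ∑ i, x i = ∑ i, xs i)
    (heq : ∀ i j : Fin n, f' i (xs i) = f' j (xs j)) :
    ∑ i, f i (x i) - ∑ i, f i (xs i) ≤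
      Real.sqrt (∑ i, (x i - xs i) ^ 2) *
        Real.sqrt (∑ i, (f' i (x i) - f' i (xs i)) ^ 2) := by
  have hcentered : ∑ i, f' i (xs i) * (x i - xs i) = 0 :=
    sum_mul_eq_zero_of_forall_eq heq (by rw [sum_sub_distrib, hsum, sub_self])
  calc ∑ i, f i (x i) - ∑ i, f i (xs i)
      ≤ ∑ i, f' i (x i) * (x i - xs i) := by
        rw [← sum_sub_distrib]
        exact sum_le_sum fun i _ => (hconv i).sub_le_mul_sub_of_hasDerivAt
          (Set.mem_univ _) (Set.mem_univ _) (hderiv i (x i))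
    _ = ∑ i, (x i - xs i) * (f' i (x i) - f' i (xs i)) := by
        rw [← sub_zero (∑ i, f' i (x i) * _), ← hcentered, ← sum_sub_distrib]
        exact sum_congr rfl fun i _ => by ring
    _ ≤ _ := Real.sum_mul_le_sqrt_mul_sqrt _ _ _

/-- If Σ xᵢ = Σ xᵢ* and the derivatives f_i'(x_i*) all agree, then
F(x) − F(x*) ≤ ‖x − x*‖₂ · ‖∇F(x) − ∇F(x*)‖₂. -/
theorem stmt_11 (n : ℕ) (hn : 1 ≤ n) (f f' : Fin n → ℝ → ℝ)
    (hconv : ∀ i, ConvexOn ℝ Set.univ (f i))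
    (hderiv : ∀ i t, HasDerivAt (f i) (f' i t) t)
    (x xs : Fin n → ℝ)
    (hsum : ∑ i, x i = ∑ i, xs i)
    (heq : ∀ i j : Fin n, f' i (xs i) = f' j (xs j)) :
    ∑ i, f i (x i) - ∑ i, f i (xs i) ≤
      Real.sqrt (∑ i, (x i - xs i) ^ 2) *
        Real.sqrt (∑ i, (f' i (x i) - f' i (xs i)) ^ 2) :=
  stmt_11_general n f f' hconv hderiv x xs hsum heq
end

section
/- Suppose each f_i is in addition μ-strongly convex for some μ > 0. Let x, x* ∈ ℝ^n with Σ_{i=1}^n x_i = Σ_{i=1}^n x_i*, and suppose the derivatives f_i'(x_i*) all equal a common value q. Then Σ_{i=1}^n (f_i'(x_i) − f_i'(x_i*))² ≥ 2μ (F(x) − F(x*)). -/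
/-! Strong convexity of `f i` at `x i`, evaluated at `xs i`, bounds `f i (x i) - f i (xs i)` by
`f' i (x i) * d - μ/2 * d²` with `d = x i - xs i`. Writing `f' i (x i) = q + g`, completing the square
gives at most `q * d + g² / (2μ)`, and the `q`-terms cancel in the sum because `∑ d = 0`. -/

open Finset

lemma two_mul_sub_le_sq_add_of_strong_convexity {w w' : ℝ → ℝ} {μ a b : ℝ} (hμ : 0 ≤ μ)
    (hstrong : w a + w' a * (b - a) + μ / 2 * (b - a) ^ 2 ≤ w b) :
    2 * μ * (w a - w b) ≤ (w' a - w' b) ^ 2 + 2 * μ * w' b * (a - b) := by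
  have h := mul_le_mul_of_nonneg_left hstrong (by positivity : (0 : ℝ) ≤ 2 * μ)
  nlinarith [sq_nonneg (w' a - w' b - μ * (a - b))]

lemma sum_mul_sub_eq_zero {ι : Type*} (s : Finset ι) (c : ℝ) {x y : ι → ℝ}
    (hsum : ∑ i ∈ s, x i = ∑ i ∈ s, y i) : ∑ i ∈ s, c * (x i - y i) = 0 := by
  rw [← mul_sum, sum_sub_distrib, hsum, sub_self, mul_zero]

theorem stmt_12_general (n : ℕ) (f f' : Fin n → ℝ → ℝ) (μ : ℝ) (hμ : 0 < μ)
    (hstrong : ∀ i, ∀ u v : ℝ,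
      f i v + f' i v * (u - v) + μ / 2 * (u - v) ^ 2 ≤ f i u)
    (x xs : Fin n → ℝ)
    (hsum : ∑ i, x i = ∑ i, xs i)
    (q : ℝ) (heq : ∀ i : Fin n, f' i (xs i) = q) :
    2 * μ * (∑ i, f i (x i) - ∑ i, f i (xs i)) ≤
      ∑ i, (f' i (x i) - f' i (xs i)) ^ 2 := by
  have hterm : ∀ i, 2 * μ * (f i (x i) - f i (xs i)) ≤
      (f' i (x i) - f' i (xs i)) ^ 2 + 2 * μ * q * (x i - xs i) := fun i => by
    simpa only [heq i] using
      two_mul_sub_le_sq_add_of_strong_convexity hμ.le (hstrong i (xs i) (x i))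
  calc 2 * μ * (∑ i, f i (x i) - ∑ i, f i (xs i))
      = ∑ i, 2 * μ * (f i (x i) - f i (xs i)) := by rw [← sum_sub_distrib, mul_sum]
    _ ≤ ∑ i, ((f' i (x i) - f' i (xs i)) ^ 2 + 2 * μ * q * (x i - xs i)) :=
        sum_le_sum fun i _ => hterm i
    _ = ∑ i, (f' i (x i) - f' i (xs i)) ^ 2 := by
        rw [sum_add_distrib, sum_mul_sub_eq_zero _ _ hsum, add_zero]

/-- If each f_i is μ-strongly convex (μ > 0), Σ xᵢ = Σ xᵢ*, and the
derivatives f_i'(x_i*) all equal a common value q, then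
Σᵢ (f_i'(x_i) − f_i'(x_i*))² ≥ 2μ (F(x) − F(x*)). -/
theorem stmt_12 (n : ℕ) (hn : 1 ≤ n) (f f' : Fin n → ℝ → ℝ) (μ : ℝ) (hμ : 0 < μ)
    (hconv : ∀ i, ConvexOn ℝ Set.univ (f i))
    (hderiv : ∀ i t, HasDerivAt (f i) (f' i t) t)
    (hstrong : ∀ i, ∀ u v : ℝ,
      f i v + f' i v * (u - v) + μ / 2 * (u - v) ^ 2 ≤ f i u)
    (x xs : Fin n → ℝ)
    (hsum : ∑ i, x i = ∑ i, xs i)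
    (q : ℝ) (heq : ∀ i : Fin n, f' i (xs i) = q) :
    2 * μ * (∑ i, f i (x i) - ∑ i, f i (xs i)) ≤
      ∑ i, (f' i (x i) - f' i (xs i)) ^ 2 :=
  stmt_12_general n f f' μ hμ hstrong x xs hsum q heq
end
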